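/- The infinite Fibonacci word f is mirror invariant: for every factor x of f, the reversal x^R is also a factor of f. -/

import Mathlib

/-- The Fibonacci morphism φ: 0 ↦ 01, 1 ↦ 0. -/
def fibPhi (w : List ℕ) : List ℕ := (w.map (fun c => if c = 0 then [0, 1] else [0])).flatten

/-- The infinite Fibonacci word f = 0100101001001⋯, the fixed point of φ starting with 0. -/
def fibWord (i : ℕ) : ℕ := ((fibPhi^[i + 2]) [0]).getD i 0

/-- A finite word is a factor of the infinite Fibonacci word. -/
def IsFibFactor (x : List ℕ) : Prop :=
  ∃ i : ℕ, x = (List.range x.length).map (fun t => fibWord (i + t))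

/-!
The finite Fibonacci words `Aₙ = φⁿ(0)` satisfy `Aₙ₊₂ = Aₙ₊₁ Aₙ` and are prefixes of one another
and of `f`, so the factors of `f` are exactly the factors of the words `Aₙ`. Deleting the last two
letters of `Aₙ` leaves a palindrome `Pₙ`: the deleted pair alternates between `01` and `10`, which
makes the reversal of `Pₙ₊₃ = Aₙ₊₂ Pₙ₊₁ = Pₙ₊₂ (ab) Pₙ₊₁` equal to `Pₙ₊₁ (ab)ᴿ Pₙ₊₂ = Aₙ₊₁ Pₙ₊₂`,
which is `Pₙ₊₃` again because `Aₙ₊₁ Pₙ₊₂ = Aₙ₊₂ Pₙ₊₁`. As `Aₙ` is a prefix of the palindrome `Pₙ₊₃`, which is a prefix of `Aₙ₊₃`,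
the reversal of a factor of `Aₙ` is again a factor of `Aₙ₊₃`.
-/

def fibBlock (n : ℕ) : List ℕ := fibPhi^[n] [0]

lemma fibPhi_append (u v : List ℕ) : fibPhi (u ++ v) = fibPhi u ++ fibPhi v := by
  simp [fibPhi]

lemma fibBlock_succ (n : ℕ) : fibBlock (n + 1) = fibPhi (fibBlock n) :=
  Function.iterate_succ_apply' _ _ _

lemma fibBlock_add_two (n : ℕ) : fibBlock (n + 2) = fibBlock (n + 1) ++ fibBlock n := by
  induction n with
  | zero => rfl
  | succ n ih =>
    conv_lhs => rw [fibBlock_succ, ih, fibPhi_append, ← fibBlock_succ, ← fibBlock_succ]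

lemma lt_length_fibBlock : ∀ n, n < (fibBlock n).length
  | 0 => by decide
  | 1 => by decide
  | n + 2 => by
    have := lt_length_fibBlock n
    have := lt_length_fibBlock (n + 1)
    rw [fibBlock_add_two, List.length_append]
    omega

lemma fibBlock_prefix_succ : ∀ n, fibBlock n <+: fibBlock (n + 1)
  | 0 => ⟨[1], rfl⟩
  | n + 1 => by rw [fibBlock_add_two]; exact List.prefix_append _ _

lemma fibBlock_prefix_of_le {m n : ℕ} (h : m ≤ n) : fibBlock m <+: fibBlock n := by
  induction n, h using Nat.le_induction with
  | base => exact List.prefix_refl _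
  | succ n _ ih => exact ih.trans (fibBlock_prefix_succ n)

lemma fibWord_eq_getElem_fibBlock (n k : ℕ) (hk : k < (fibBlock n).length) :
    fibWord k = (fibBlock n)[k] := by
  have hk' : k < (fibBlock (k + 2)).length := (lt_length_fibBlock _).trans' (by omega)
  change (fibBlock (k + 2)).getD k 0 = _
  rw [List.getD_eq_getElem _ _ hk']
  rcases le_total n (k + 2) with h | h
  · exact ((fibBlock_prefix_of_le h).getElem hk).symm
  · exact (fibBlock_prefix_of_le h).getElem hk'

lemma map_range_fibWord_eq_take_drop (n i k : ℕ) (h : i + k ≤ (fibBlock n).length) :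
    (List.range k).map (fun t => fibWord (i + t)) = ((fibBlock n).drop i).take k := by
  apply List.ext_getElem
  · simp only [List.length_map, List.length_range, List.length_take, List.length_drop]
    omega
  · intro t _ ht
    simp only [List.getElem_map, List.getElem_range, List.getElem_take, List.getElem_drop]
    simp only [List.length_take, List.length_drop, lt_inf_iff] at ht
    exact fibWord_eq_getElem_fibBlock n (i + t) (by omega)

lemma isFibFactor_iff_exists_infix_fibBlock {x : List ℕ} :
    IsFibFactor x ↔ ∃ n, x <:+: fibBlock n := by
  constructor
  · rintro ⟨i, hx⟩
    have hlen : i + x.length ≤ (fibBlock (i + x.length)).length := (lt_length_fibBlock _).le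
    rw [map_range_fibWord_eq_take_drop _ _ _ hlen] at hx
    exact ⟨_, hx ▸ (List.take_prefix _ _).isInfix.trans (List.drop_suffix _ _).isInfix⟩
  · rintro ⟨n, u, v, huv⟩
    refine ⟨u.length, ?_⟩
    rw [map_range_fibWord_eq_take_drop n _ _ (by rw [← huv]; simp), ← huv, List.append_assoc,
      List.drop_left, List.take_left]

def fibTail (n : ℕ) : List ℕ := if n % 2 = 1 then [0, 1] else [1, 0]

def fibPal (n : ℕ) : List ℕ := (fibBlock n).dropLast.dropLast

lemma fibTail_add_two (n : ℕ) : fibTail (n + 2) = fibTail n := by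
  simp [fibTail]

lemma reverse_fibTail (n : ℕ) : (fibTail n).reverse = fibTail (n + 1) := by
  rcases Nat.mod_two_eq_zero_or_one n with h | h <;> simp [fibTail, h, Nat.add_mod]

lemma fibTail_suffix_fibBlock : ∀ n, fibTail (n + 1) <:+ fibBlock (n + 1)
  | 0 => List.suffix_refl _
  | 1 => ⟨[0], rfl⟩
  | n + 2 => by
    rw [fibBlock_add_two (n + 1), fibTail_add_two]
    exact (fibTail_suffix_fibBlock n).trans (List.suffix_append _ _)

lemma fibPal_eq_of_fibBlock_eq_append {n k : ℕ} {u : List ℕ} (h : fibBlock n = u ++ fibTail k) :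
    fibPal n = u := by
  unfold fibTail at h
  split_ifs at h <;> simp [fibPal, h]

lemma fibBlock_eq_fibPal_append_fibTail (n : ℕ) :
    fibBlock (n + 1) = fibPal (n + 1) ++ fibTail (n + 1) := by
  obtain ⟨u, hu⟩ := fibTail_suffix_fibBlock n
  rw [← hu, fibPal_eq_of_fibBlock_eq_append hu.symm]

lemma fibPal_add_three (n : ℕ) : fibPal (n + 3) = fibBlock (n + 2) ++ fibPal (n + 1) := by
  apply fibPal_eq_of_fibBlock_eq_append (k := n + 1)
  rw [fibBlock_add_two (n + 1), fibBlock_eq_fibPal_append_fibTail n, List.append_assoc]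

lemma fibBlock_append_fibPal_comm (n : ℕ) :
    fibBlock (n + 2) ++ fibPal (n + 1) = fibBlock (n + 1) ++ fibPal (n + 2) := by
  induction n with
  | zero => rfl
  | succ n ih =>
    rw [fibBlock_add_two (n + 1), List.append_assoc, ← ih, fibPal_add_three]

lemma fibPal_palindrome : ∀ n, (fibPal n).Palindrome
  | 0 => .nil
  | 1 => .nil
  | 2 => .of_reverse_eq rfl
  | n + 3 => by
    have h₁ := (fibPal_palindrome (n + 1)).reverse_eq
    have h₂ := (fibPal_palindrome (n + 2)).reverse_eq
    refine .of_reverse_eq ?_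
    calc (fibPal (n + 3)).reverse
        = (fibPal (n + 2) ++ fibTail (n + 2) ++ fibPal (n + 1)).reverse := by
          rw [fibPal_add_three, fibBlock_eq_fibPal_append_fibTail (n + 1)]
      _ = fibPal (n + 1) ++ fibTail (n + 1) ++ fibPal (n + 2) := by
          simp only [List.reverse_append, h₁, h₂, reverse_fibTail, fibTail_add_two,
            List.append_assoc]
      _ = fibPal (n + 3) := by
          rw [← fibBlock_eq_fibPal_append_fibTail, ← fibBlock_append_fibPal_comm, fibPal_add_three]

lemma fibBlock_prefix_fibPal (n : ℕ) : fibBlock n <+: fibPal (n + 3) := by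
  rw [fibPal_add_three]
  exact (fibBlock_prefix_of_le (by omega)).trans (List.prefix_append _ _)

lemma fibPal_prefix_fibBlock (n : ℕ) : fibPal n <+: fibBlock n :=
  (List.dropLast_prefix _).trans (List.dropLast_prefix _)

/-- The Fibonacci word is mirror invariant: the reversal of any factor is a factor. -/
theorem fibWord_mirror_invariant :
    ∀ x : List ℕ, IsFibFactor x → IsFibFactor x.reverse := by
  intro x hx
  obtain ⟨n, hn⟩ := isFibFactor_iff_exists_infix_fibBlock.mp hx
  have hx_pal : x <:+: fibPal (n + 3) := hn.trans (fibBlock_prefix_fibPal n).isInfix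
  have hrev : x.reverse <:+: fibPal (n + 3) :=
    (fibPal_palindrome _).reverse_eq ▸ hx_pal.reverse
  exact isFibFactor_iff_exists_infix_fibBlock.mpr
    ⟨n + 3, hrev.trans (fibPal_prefix_fibBlock _).isInfix⟩
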